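/- Let η be the regression function of (X,Y) with Y ∈ [0,1], and f: ℝ^d → [0,1] with ∫ |η(x) − f(x)| μ(dx) < ε'. Then ∫ | E[f(X) g_{α,β}(X,x)] / E[g_{α,β}(X,x)] − E[η(X) g_{α,β}(X,x)] / E[g_{α,β}(X,x)] | μ(dx) ≤ R·ε', where R is the covering-lemma constant satisfying sup_u ∫ g_{α,β}(u,x)/E[g_{α,β}(X,x)] μ(dx) ≤ R. -/

import Mathlib

/-!
Writing `D x = ∫ g(u, x) dμ(u)`, the two conditional means differ at `x` by at most
`∫ |η(u) - φ(u)| g(u, x) / D x dμ(u)`. Integrating in `x` and exchanging the order of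
integration (Tonelli), the weight `∫ g(u, x) / D x dμ(x)` is at most `R` for every `u`,
which leaves `R ∫ |η - φ| dμ ≤ R ε'`.
-/

open MeasureTheory

theorem ofReal_integral_le_lintegral_ofReal {α : Type*} [MeasurableSpace α] {μ : Measure α}
    {f : α → ℝ} (hf : ∀ x, 0 ≤ f x) :
    ENNReal.ofReal (∫ x, f x ∂μ) ≤ ∫⁻ x, ENNReal.ofReal (f x) ∂μ :=
  (Real.ofReal_le_enorm _).trans <| (enorm_integral_le_lintegral_enorm f).trans_eq <|
    lintegral_congr fun x => Real.enorm_eq_ofReal (hf x)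

/-- When `∫ w = 0` both sides vanish because `x / 0 = 0`. -/
theorem abs_integral_mul_div_sub_le {α : Type*} [MeasurableSpace α] {μ : Measure α}
    {w φ η : α → ℝ} {C : ℝ} (hw : ∀ u, 0 ≤ w u)
    (hφm : AEStronglyMeasurable φ μ) (hφ : ∀ u, |φ u| ≤ C)
    (hηm : AEStronglyMeasurable η μ) (hη : ∀ u, |η u| ≤ C) :
    |(∫ u, φ u * w u ∂μ) / (∫ u, w u ∂μ) - (∫ u, η u * w u ∂μ) / (∫ u, w u ∂μ)|
      ≤ ∫ u, |η u - φ u| * (w u / ∫ u', w u' ∂μ) ∂μ := by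
  by_cases hD : ∫ u, w u ∂μ = 0
  · simp [hD]
  have hwint : Integrable w μ := Integrable.of_integral_ne_zero hD
  have hφw := hwint.bdd_mul hφm (ae_of_all _ hφ)
  have hηw := hwint.bdd_mul hηm (ae_of_all _ hη)
  calc |(∫ u, φ u * w u ∂μ) / (∫ u, w u ∂μ) - (∫ u, η u * w u ∂μ) / (∫ u, w u ∂μ)|
      = |∫ u, (φ u * w u - η u * w u) ∂μ| / ∫ u, w u ∂μ := by
        rw [div_sub_div_same, ← integral_sub hφw hηw, abs_div,
          abs_of_nonneg (integral_nonneg hw : 0 ≤ ∫ u, w u ∂μ)]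
    _ ≤ (∫ u, |η u - φ u| * w u ∂μ) / ∫ u, w u ∂μ := by
        refine div_le_div_of_nonneg_right ?_ (integral_nonneg hw)
        refine abs_integral_le_integral_abs.trans_eq (integral_congr_ae (ae_of_all _ fun u => ?_))
        dsimp only
        rw [← sub_mul, abs_mul, abs_of_nonneg (hw u), abs_sub_comm]
    _ = ∫ u, |η u - φ u| * (w u / ∫ u', w u' ∂μ) ∂μ := by
        simp_rw [← integral_div, mul_div_assoc]

/-- Schur's test for a nonnegative kernel, proved through Tonelli's theorem. -/
theorem integral_le_mul_integral_of_le_integral_kernel {α β : Type*} [MeasurableSpace α]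
    [MeasurableSpace β] {μ : Measure α} {ν : Measure β} [SFinite μ] [SFinite ν]
    {h : α → ℝ} {F : β → ℝ} {K : β → α → ℝ} {R : ℝ}
    (hh0 : ∀ x, 0 ≤ h x) (hh : ∀ x, h x ≤ ∫ u, F u * K u x ∂ν)
    (hF0 : ∀ u, 0 ≤ F u) (hF : Integrable F ν)
    (hK0 : ∀ u x, 0 ≤ K u x) (hKm : Measurable (Function.uncurry K))
    (hKint : ∀ u, Integrable (K u) μ) (hKR : ∀ u, ∫ x, K u x ∂μ ≤ R) (hR : 0 ≤ R) :
    ∫ x, h x ∂μ ≤ R * ∫ u, F u ∂ν := by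
  have hprod : AEMeasurable
      (Function.uncurry fun x u => ENNReal.ofReal (F u) * ENNReal.ofReal (K u x)) (μ.prod ν) :=
    (ENNReal.measurable_ofReal.comp_aemeasurable hF.aemeasurable.comp_snd).mul
      (ENNReal.measurable_ofReal.comp (hKm.comp measurable_swap)).aemeasurable
  have key : ENNReal.ofReal (∫ x, h x ∂μ) ≤ ENNReal.ofReal (R * ∫ u, F u ∂ν) := calc
    ENNReal.ofReal (∫ x, h x ∂μ) ≤ ∫⁻ x, ENNReal.ofReal (h x) ∂μ :=
        ofReal_integral_le_lintegral_ofReal hh0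
    _ ≤ ∫⁻ x, ∫⁻ u, ENNReal.ofReal (F u) * ENNReal.ofReal (K u x) ∂ν ∂μ :=
        lintegral_mono fun x => (ENNReal.ofReal_le_ofReal (hh x)).trans <|
          (ofReal_integral_le_lintegral_ofReal fun u => mul_nonneg (hF0 u) (hK0 u x)).trans_eq <|
            lintegral_congr fun u => ENNReal.ofReal_mul (hF0 u)
    _ = ∫⁻ u, ∫⁻ x, ENNReal.ofReal (F u) * ENNReal.ofReal (K u x) ∂μ ∂ν :=
        lintegral_lintegral_swap hprod
    _ = ∫⁻ u, ENNReal.ofReal (F u) * ∫⁻ x, ENNReal.ofReal (K u x) ∂μ ∂ν :=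
        lintegral_congr fun u => lintegral_const_mul' _ _ ENNReal.ofReal_ne_top
    _ ≤ ∫⁻ u, ENNReal.ofReal (F u) * ENNReal.ofReal R ∂ν := by
        refine lintegral_mono fun u => ?_
        rw [← ofReal_integral_eq_lintegral_ofReal (hKint u) (ae_of_all _ (hK0 u))]
        gcongr
        exact hKR u
    _ = ENNReal.ofReal (R * ∫ u, F u ∂ν) := by
        rw [lintegral_mul_const' _ _ ENNReal.ofReal_ne_top,
          ← ofReal_integral_eq_lintegral_ofReal hF (ae_of_all _ hF0), ← ENNReal.ofReal_mul' hR,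
          mul_comm]
  exact (ENNReal.ofReal_le_ofReal_iff (mul_nonneg hR (integral_nonneg hF0))).1 key

theorem stmt_8_general {d : ℕ}
    (μ : Measure (EuclideanSpace ℝ (Fin d))) [IsProbabilityMeasure μ]
    (g : EuclideanSpace ℝ (Fin d) → EuclideanSpace ℝ (Fin d) → ℝ)
    (hg0 : ∀ u x, 0 ≤ g u x)
    (hgm : Measurable (Function.uncurry g))
    (hgratio : ∀ u, Integrable (fun x => g u x / ∫ u', g u' x ∂μ) μ)
    (η φ : EuclideanSpace ℝ (Fin d) → ℝ) (hηm : Measurable η) (hφm : Measurable φ)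
    (hη0 : ∀ x, 0 ≤ η x) (hη1 : ∀ x, η x ≤ 1) (hφ0 : ∀ x, 0 ≤ φ x) (hφ1 : ∀ x, φ x ≤ 1)
    (ε' : ℝ) (hεf : ∫ x, |η x - φ x| ∂μ < ε')
    (R : ℝ) (hR : ∀ u, ∫ x, g u x / (∫ u', g u' x ∂μ) ∂μ ≤ R) :
    ∫ x, |(∫ u, φ u * g u x ∂μ) / (∫ u, g u x ∂μ) -
        (∫ u, η u * g u x ∂μ) / (∫ u, g u x ∂μ)| ∂μ ≤ R * ε' := by
  have hη : ∀ u, |η u| ≤ 1 := fun u => abs_le.2 ⟨by linarith [hη0 u], hη1 u⟩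
  have hφ : ∀ u, |φ u| ≤ 1 := fun u => abs_le.2 ⟨by linarith [hφ0 u], hφ1 u⟩
  have hdiff : Integrable (fun u => |η u - φ u|) μ :=
    .of_bound (hηm.sub hφm).abs.aestronglyMeasurable 1 <| ae_of_all _ fun u => by
      rw [Real.norm_eq_abs, abs_abs, abs_le]
      constructor <;> linarith [hη0 u, hη1 u, hφ0 u, hφ1 u]
  have hDm : Measurable fun x => ∫ u, g u x ∂μ :=
    hgm.stronglyMeasurable.integral_prod_left.measurable
  have hR0 : 0 ≤ R :=
    (integral_nonneg fun x => div_nonneg (hg0 0 x) (integral_nonneg fun u => hg0 u x)).trans (hR 0)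
  calc _ ≤ R * ∫ u, |η u - φ u| ∂μ :=
        integral_le_mul_integral_of_le_integral_kernel (fun x => abs_nonneg _)
          (fun x => abs_integral_mul_div_sub_le (hg0 · x) hφm.aestronglyMeasurable hφ
            hηm.aestronglyMeasurable hη)
          (fun u => abs_nonneg _) hdiff
          (fun u x => div_nonneg (hg0 u x) (integral_nonneg fun u' => hg0 u' x))
          (hgm.div (hDm.comp measurable_snd)) hgratio hR hR0
    _ ≤ R * ε' := mul_le_mul_of_nonneg_left hεf.le hR0

/-- Proposition 1(2): If `∫ |η − φ| dμ < ε'` and `R` satisfies the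
covering-lemma bound `sup_u ∫ g(u,x)/E[g(X,x)] μ(dx) ≤ R`, then
`∫ |E[φ(X)g(X,x)]/E[g(X,x)] − E[η(X)g(X,x)]/E[g(X,x)]| μ(dx) ≤ R·ε'`.
Here `g(u,x) = g_{α,β}(u,x)` is the kernel weight, `μ` the law of `X`, and `η` the
regression function; `E[T_n*(x)] = E[η(X)g(X,x)]/E[g(X,x)]`. -/
theorem stmt_8 {d : ℕ}
    (μ : Measure (EuclideanSpace ℝ (Fin d))) [IsProbabilityMeasure μ]
    (g : EuclideanSpace ℝ (Fin d) → EuclideanSpace ℝ (Fin d) → ℝ)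
    (hg0 : ∀ u x, 0 ≤ g u x)
    (hgm : Measurable (Function.uncurry g))
    (hgint : ∀ x, Integrable (fun u => g u x) μ)
    (hgratio : ∀ u, Integrable (fun x => g u x / ∫ u', g u' x ∂μ) μ)
    (η φ : EuclideanSpace ℝ (Fin d) → ℝ) (hηm : Measurable η) (hφm : Measurable φ)
    (hη0 : ∀ x, 0 ≤ η x) (hη1 : ∀ x, η x ≤ 1) (hφ0 : ∀ x, 0 ≤ φ x) (hφ1 : ∀ x, φ x ≤ 1)
    (ε' : ℝ) (hεf : ∫ x, |η x - φ x| ∂μ < ε')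
    (R : ℝ) (hR : ∀ u, ∫ x, g u x / (∫ u', g u' x ∂μ) ∂μ ≤ R) :
    ∫ x, |(∫ u, φ u * g u x ∂μ) / (∫ u, g u x ∂μ) -
        (∫ u, η u * g u x ∂μ) / (∫ u, g u x ∂μ)| ∂μ ≤ R * ε' :=
  stmt_8_general μ g hg0 hgm hgratio η φ hηm hφm hη0 hη1 hφ0 hφ1 ε' hεf R hR
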